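/- Let q be a prime power and n > 1 a positive integer coprime to q, with prime factorization n = p₁^{e₁}···p_s^{e_s}. Define ω = 2·ord_{rad(n)}(q) if q^{ord_{rad(n)}(q)} ≡ 3 (mod 4) and 8 ∣ n, and ω = ord_{rad(n)}(q) otherwise. Then the multiplicative order of q modulo n satisfies ord_n(q) = ω · p₁^{m₁}···p_s^{m_s}, where m_i = max(e_i − v_{p_i}(q^{ω} − 1), 0) for each i. (In particular, the degree of any irreducible polynomial over the field with q elements of order n equals this quantity, so the Singleton bound of the irreducible constacyclic code it generates is ω·p₁^{m₁}···p_s^{m_s} + 1.) -/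

import Mathlib

/-! With `a = q ^ ω`, every prime divisor of `n` divides `a - 1`, and `4 ∣ a - 1` whenever
`8 ∣ n`: this is what doubling `ord_{rad n}(q)` achieves. Lifting the exponent then gives
`v_p(a ^ u - 1) = v_p(a - 1) + v_p(u)` for each `p ∣ n` (the remaining case `p = 2`,
`v_2(n) ≤ 2`, `a ≡ 3 mod 4` is a computation mod 4), so `n ∣ a ^ u - 1` iff
`∏ p ^ (v_p(n) - v_p(a - 1)) ∣ u`, i.e. this product is `ord_n(a)`. Finally `ω ∣ ord_n(q)`,
hence `ord_n(q) = ω · ord_n(q ^ ω)`. -/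

theorem orderOf_natCast_dvd_iff {a : ℕ} (ha : 0 < a) (m k : ℕ) :
    orderOf (a : ZMod m) ∣ k ↔ m ∣ a ^ k - 1 := by
  rw [orderOf_dvd_iff_pow_eq_one, ← ZMod.natCast_eq_zero_iff,
    Nat.cast_sub (Nat.one_le_pow _ _ ha), Nat.cast_pow, Nat.cast_one, sub_eq_zero]

theorem orderOf_natCast_dvd_of_dvd (a : ℕ) {m n : ℕ} (h : m ∣ n) :
    orderOf (a : ZMod m) ∣ orderOf (a : ZMod n) := by
  simpa using orderOf_map_dvd (ZMod.castHom h (ZMod m)).toMonoidHom (a : ZMod n)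

theorem orderOf_natCast_pos {a n : ℕ} (hn : n ≠ 0) (h : a.Coprime n) :
    0 < orderOf (a : ZMod n) := by
  have : NeZero n := ⟨hn⟩
  rw [← ZMod.coe_unitOfCoprime a h, orderOf_units]
  exact orderOf_pos _

theorem four_dvd_pow_sub_one_iff {a : ℕ} (ha : a % 4 = 3) (u : ℕ) :
    4 ∣ a ^ u - 1 ↔ 2 ∣ u := by
  have h3 : (a : ZMod 4) = 3 := by rw [← ZMod.natCast_mod, ha]; rfl
  have : orderOf (a : ZMod 4) = 2 := by
    rw [h3]; exact orderOf_eq_prime (by decide) (by decide)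
  rw [← orderOf_natCast_dvd_iff (by omega), this]

theorem Nat.factorization_pow_sub_one {p a u : ℕ} (hp : p.Prime) (h1 : 1 < a) (hpa : p ∣ a - 1)
    (h4 : p = 2 → 4 ∣ a - 1) (hu : u ≠ 0) :
    (a ^ u - 1).factorization p = (a - 1).factorization p + u.factorization p := by
  have := Fact.mk hp
  have hau : a ^ u - 1 ≠ 0 := Nat.sub_ne_zero_of_lt (Nat.one_lt_pow hu h1)
  simp only [Nat.factorization_def _ hp]
  rcases hp.eq_two_or_odd' with rfl | hodd
  · rw [← Nat.cast_inj (R := ℕ∞), Nat.cast_add, padicValNat_eq_emultiplicity hau,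
      padicValNat_eq_emultiplicity (by omega), padicValNat_eq_emultiplicity hu,
      ← Int.natCast_emultiplicity, ← Int.natCast_emultiplicity, ← Int.natCast_emultiplicity]
    push_cast [Nat.cast_sub h1.le, Nat.cast_sub (Nat.one_le_pow u a (by omega))]
    have h4 : (4 : ℤ) ∣ a - 1 := by have := h4 rfl; omega
    simpa using Int.two_pow_sub_pow' (x := a) (y := 1) u h4 (by omega)
  · have hpa' : ¬ p ∣ a := fun h => hp.one_lt.ne'
      (Nat.dvd_one.1 (by simpa [Nat.sub_sub_self h1.le] using Nat.dvd_sub h hpa))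
    simpa using padicValNat.pow_sub_pow hodd h1 (by simpa) hpa' hu

theorem Nat.le_factorization_pow_sub_one_iff {p a e u : ℕ} (hp : p.Prime) (h1 : 1 < a)
    (hpa : p ∣ a - 1) (h2 : p = 2 → e ≤ 2 ∨ 4 ∣ a - 1) (hu : u ≠ 0) :
    e ≤ (a ^ u - 1).factorization p ↔ e - (a - 1).factorization p ≤ u.factorization p := by
  by_cases h4 : p = 2 → 4 ∣ a - 1
  · rw [Nat.factorization_pow_sub_one hp h1 hpa h4 hu]
    omega
  obtain ⟨rfl, hn4⟩ := Classical.not_imp.1 h4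
  have he : e ≤ 2 := (h2 rfl).resolve_right hn4
  have hau : a ^ u - 1 ≠ 0 := Nat.sub_ne_zero_of_lt (Nat.one_lt_pow hu h1)
  have hsq : 2 ^ 2 ∣ a ^ u - 1 ↔ 2 ^ 1 ∣ u := by
    simpa using four_dvd_pow_sub_one_iff (a := a) (by omega) u
  have hdvd : 2 ^ 1 ∣ a ^ u - 1 := by
    simpa using hpa.trans (by simpa using Nat.sub_dvd_pow_sub_pow a 1 u)
  have hv : 2 ^ 1 ∣ a - 1 ∧ ¬ 2 ^ 2 ∣ a - 1 := by simpa using ⟨hpa, hn4⟩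
  simp only [Nat.prime_two.pow_dvd_iff_le_factorization hau,
    Nat.prime_two.pow_dvd_iff_le_factorization hu,
    Nat.prime_two.pow_dvd_iff_le_factorization (by omega : a - 1 ≠ 0)] at hsq hdvd hv
  omega

theorem Nat.factorization_prod_primeFactors_pow_sub (n m : ℕ) :
    (∏ p ∈ n.primeFactors, p ^ (n.factorization p - m.factorization p)).factorization =
      n.factorization - m.factorization := by
  have hsupp : (n.factorization - m.factorization).support ⊆ n.primeFactors :=
    Nat.support_factorization n ▸ Finsupp.support_tsub
  convert Nat.prod_pow_factorization_eq_self fun p hp => Nat.prime_of_mem_primeFactors (hsupp hp)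
  exact (Finsupp.prod_of_support_subset _ hsupp (· ^ ·) (by simp)).symm

theorem dvd_pow_sub_one_iff_prod_dvd {n a : ℕ} (hn : n ≠ 0) (h1 : 1 < a)
    (hpa : ∀ p ∈ n.primeFactors, p ∣ a - 1) (h8 : 8 ∣ n → 4 ∣ a - 1) (u : ℕ) :
    n ∣ a ^ u - 1 ↔
      ∏ p ∈ n.primeFactors, p ^ (n.factorization p - (a - 1).factorization p) ∣ u := by
  rcases eq_or_ne u 0 with rfl | hu
  · simp
  have hprod : ∏ p ∈ n.primeFactors, p ^ (n.factorization p - (a - 1).factorization p) ≠ 0 :=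
    Finset.prod_ne_zero_iff.2 fun p hp => pow_ne_zero _ (Nat.prime_of_mem_primeFactors hp).ne_zero
  rw [← Nat.factorization_le_iff_dvd hn (Nat.sub_ne_zero_of_lt (Nat.one_lt_pow hu h1)),
    ← Nat.factorization_le_iff_dvd hprod hu, Nat.factorization_prod_primeFactors_pow_sub,
    Finsupp.le_def, Finsupp.le_def]
  refine forall_congr' fun p => ?_
  rw [Finsupp.tsub_apply]
  by_cases hp : p ∈ n.primeFactors
  · refine Nat.le_factorization_pow_sub_one_iff (Nat.prime_of_mem_primeFactors hp) h1
      (hpa p hp) ?_ hu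
    rintro rfl
    by_cases h : 8 ∣ n
    · exact .inr (h8 h)
    · have := (Nat.prime_two.pow_dvd_iff_le_factorization (k := 3) hn).not.1 h
      exact .inl (by omega)
  · rw [← Nat.support_factorization, Finsupp.notMem_support_iff] at hp
    simp [hp]

theorem orderOf_natCast_eq_prod {n a : ℕ} (hn : n ≠ 0) (h1 : 1 < a)
    (hpa : ∀ p ∈ n.primeFactors, p ∣ a - 1) (h8 : 8 ∣ n → 4 ∣ a - 1) :
    orderOf (a : ZMod n) =
      ∏ p ∈ n.primeFactors, p ^ (n.factorization p - (a - 1).factorization p) :=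
  Nat.dvd_right_iff_eq.1 fun u =>
    (orderOf_natCast_dvd_iff (by omega) n u).trans (dvd_pow_sub_one_iff_prod_dvd hn h1 hpa h8 u)

/-- The exponent `ω` of the theorem, for `O = ord_{rad n}(q)`. -/
def adjustedOrder (q n O : ℕ) : ℕ :=
  if q ^ O % 4 = 3 ∧ 8 ∣ n then 2 * O else O

theorem dvd_adjustedOrder (q n O : ℕ) : O ∣ adjustedOrder q n O := by
  unfold adjustedOrder
  split_ifs
  exacts [dvd_mul_left O 2, dvd_rfl]

theorem adjustedOrder_dvd {q n O t : ℕ} (hO : O ∣ t) (hnt : n ∣ q ^ t - 1) :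
    adjustedOrder q n O ∣ t := by
  unfold adjustedOrder
  split_ifs with h
  · obtain ⟨s, rfl⟩ := hO
    have h4 : 4 ∣ (q ^ O) ^ s - 1 := by
      rw [← pow_mul]
      exact (dvd_trans (by norm_num) h.2).trans hnt
    rw [four_dvd_pow_sub_one_iff h.1] at h4
    rw [mul_comm O s]
    exact mul_dvd_mul_right h4 O
  · exact hO

theorem four_dvd_pow_adjustedOrder_sub_one {q n : ℕ} (hco : n.Coprime q) (O : ℕ) (h8 : 8 ∣ n) :
    4 ∣ q ^ adjustedOrder q n O - 1 := by
  have hodd : Odd (q ^ O) :=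
    (Nat.Coprime.odd_of_left (hco.coprime_dvd_left (dvd_trans (by norm_num) h8))).pow
  unfold adjustedOrder
  split_ifs with h
  · rw [mul_comm, pow_mul]
    exact dvd_trans (by norm_num) (Nat.eight_dvd_sq_sub_one_of_odd hodd)
  · have := Nat.odd_iff.1 hodd
    omega

theorem order_mod_n_formula_general (q n : ℕ) (hq : IsPrimePow q)
    (hco : Nat.Coprime n q)
    (r : ℕ) (hr : r = ∏ p ∈ n.primeFactors, p)
    (ω : ℕ) (hω : ω = if q ^ orderOf (q : ZMod r) % 4 = 3 ∧ 8 ∣ n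
      then 2 * orderOf (q : ZMod r) else orderOf (q : ZMod r)) :
    orderOf (q : ZMod n) =
      ω * ∏ p ∈ n.primeFactors, p ^ (n.factorization p - (q ^ ω - 1).factorization p) := by
  have hq1 : 1 < q := hq.one_lt
  have hn0 : n ≠ 0 := by
    rintro rfl
    exact hq1.ne' ((Nat.coprime_zero_left q).1 hco)
  set O := orderOf (q : ZMod r)
  set t := orderOf (q : ZMod n)
  replace hω : ω = adjustedOrder q n O := hω
  have hOt : O ∣ t := orderOf_natCast_dvd_of_dvd q (hr ▸ Nat.prod_primeFactors_dvd n)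
  have hωt : ω ∣ t :=
    hω ▸ adjustedOrder_dvd hOt ((orderOf_natCast_dvd_iff (by omega) n t).1 dvd_rfl)
  have hω0 : ω ≠ 0 := ne_zero_of_dvd_ne_zero (orderOf_natCast_pos hn0 hco.symm).ne' hωt
  have hpa : ∀ p ∈ n.primeFactors, p ∣ q ^ ω - 1 := fun p hp =>
    (hr ▸ Finset.dvd_prod_of_mem _ hp).trans
      ((orderOf_natCast_dvd_iff (by omega) r ω).1 (hω ▸ dvd_adjustedOrder q n O))
  have h8 : 8 ∣ n → 4 ∣ q ^ ω - 1 := hω ▸ four_dvd_pow_adjustedOrder_sub_one hco O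
  calc t = ω * orderOf ((q : ZMod n) ^ ω) := by
        rw [orderOf_pow_of_dvd hω0 hωt, Nat.mul_div_cancel' hωt]
    _ = _ := by
      rw [← Nat.cast_pow, orderOf_natCast_eq_prod hn0 (Nat.one_lt_pow hω0 hq1) hpa h8]

/-- For a prime power `q` and `n > 1` coprime to `q`, with
`ω = 2·ord_{rad n}(q)` if `q^{ord_{rad n}(q)} ≡ 3 (mod 4)` and `8 ∣ n`, and
`ω = ord_{rad n}(q)` otherwise, the multiplicative order of `q` modulo `n` is
`ord_n(q) = ω · ∏_p p^{max(v_p(n) - v_p(q^ω - 1), 0)}`, the product running over the prime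
divisors of `n`. -/
theorem order_mod_n_formula (q n : ℕ) (hq : IsPrimePow q) (hn : 1 < n)
    (hco : Nat.Coprime n q)
    (r : ℕ) (hr : r = ∏ p ∈ n.primeFactors, p)
    (ω : ℕ) (hω : ω = if q ^ orderOf (q : ZMod r) % 4 = 3 ∧ 8 ∣ n
      then 2 * orderOf (q : ZMod r) else orderOf (q : ZMod r)) :
    orderOf (q : ZMod n) =
      ω * ∏ p ∈ n.primeFactors, p ^ (n.factorization p - (q ^ ω - 1).factorization p) :=
  order_mod_n_formula_general q n hq hco r hr ω hω
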